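/- arXiv:1209.4766 — 2 statements merged into one kernel-verified Lean document; each statement's English description precedes it below -/
import Mathlib

section
/- For all φ, ψ ∈ 𝓒 one has ⟨φ, ψ⟩_n → ⟨φ, ψ⟩ as n → ∞. -/
open MeasureTheory Filter Topology

noncomputable section

namespace Mosco

variable {E : Type*} [MeasurableSpace E]

/-- The inner product of two real-valued functions with respect to a measure,
`⟨φ, ψ⟩ = ∫ φ ψ dμ`. -/
def ip (μ : Measure E) (φ ψ : E → ℝ) : ℝ := ∫ x, φ x * ψ x ∂μ

/-- The framework of Section 2.1: mutually singular probability measures `ν n`, `n : ℕ`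
(`ν 0` playing the role of the limit measure `ν`), such that `L²(E, ν 0)` is separable,
together with disjoint sets `En n` carrying `ν n`, and a linear subset `F = 𝓕 ⊆ 𝓓`
which is dense in `L²(E, ν 0)`. -/
structure Frame (E : Type*) [MeasurableSpace E] where
  ν : ℕ → Measure E
  prob : ∀ n, IsProbabilityMeasure (ν n)
  singular : ∀ m n, m ≠ n → (ν m).MutuallySingular (ν n)
  separableL2 : TopologicalSpace.SeparableSpace (Lp ℝ 2 (ν 0))
  En : ℕ → Set E
  measEn : ∀ n, MeasurableSet (En n)
  disjEn : ∀ m n, m ≠ n → Disjoint (En m) (En n)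
  nullEn : ∀ n, ν n (En n)ᶜ = 0
  F : Set (E → ℝ)
  F_measurable : ∀ φ ∈ F, Measurable φ
  F_memL2 : ∀ φ ∈ F, ∀ n, MemLp φ 2 (ν n)
  F_tendsto : ∀ φ ∈ F, Tendsto (fun n => ip (ν n) φ φ) atTop (𝓝 (ip (ν 0) φ φ))
  F_linear : ∀ φ ∈ F, ∀ ψ ∈ F, ∀ a b : ℝ, (fun x => a * φ x + b * ψ x) ∈ F
  F_dense : ∀ f : E → ℝ, Measurable f → MemLp f 2 (ν 0) → ∀ ε : ℝ, 0 < ε →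
    ∃ φ ∈ F, ip (ν 0) (fun x => f x - φ x) (fun x => f x - φ x) < ε

/-- The set `𝓓`: everywhere defined measurable functions lying in every `L²(E, ν n)`
whose `ν n`-norms converge to the `ν 0`-norm. -/
def Frame.D (fr : Frame E) : Set (E → ℝ) :=
  {φ | Measurable φ ∧ (∀ n, MemLp φ 2 (fr.ν n)) ∧
    Tendsto (fun n => ip (fr.ν n) φ φ) atTop (𝓝 (ip (fr.ν 0) φ φ))}

/-- The set `𝓒`: elements of `𝓓` satisfying conditions (c1) and (c2). -/
def Frame.C (fr : Frame E) : Set (E → ℝ) :=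
  {φ | φ ∈ fr.D ∧ (∀ n, 1 ≤ n → ∃ g ∈ fr.F, φ =ᵐ[fr.ν n] g) ∧
    ∀ ψ ∈ fr.F, Tendsto (fun n => ip (fr.ν n) φ ψ) atTop (𝓝 (ip (fr.ν 0) φ ψ))}

/-- The set `𝓥` of multipliers mapping `𝓓` into `𝓓` and `𝓕` into `𝓕`. -/
def Frame.V (fr : Frame E) : Set (E → ℝ) :=
  {ψ | Measurable ψ ∧ (∀ n, MemLp ψ 2 (fr.ν n)) ∧
    (∀ σ ∈ fr.D, (fun x => σ x * ψ x) ∈ fr.D) ∧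
    (∀ τ ∈ fr.F, (fun x => τ x * ψ x) ∈ fr.F)}

/-- `w`-convergence of a sequence `φs` (with `φs n` regarded as an element of
`L²(E, ν n)`) to `φ ∈ L²(E, ν 0)`. -/
def Frame.WConv (fr : Frame E) (φs : ℕ → E → ℝ) (φ : E → ℝ) : Prop :=
  ∀ ψ ∈ fr.C, Tendsto (fun n => ip (fr.ν n) (φs n) ψ) atTop (𝓝 (ip (fr.ν 0) φ ψ))

/-- `s`-convergence: `w`-convergence together with convergence of the norms. -/
def Frame.SConv (fr : Frame E) (φs : ℕ → E → ℝ) (φ : E → ℝ) : Prop :=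
  fr.WConv φs φ ∧
  Tendsto (fun n => ip (fr.ν n) (φs n) (φs n)) atTop (𝓝 (ip (fr.ν 0) φ φ))

/-! Approximate `ψ` in `L²(ν 0)` by `χ ∈ 𝓕`. Condition (c2) for `φ` gives `⟨φ, χ⟩ₙ → ⟨φ, χ⟩`, and
by Cauchy–Schwarz `|⟨φ, ψ⟩ₙ - ⟨φ, χ⟩ₙ| ≤ ‖φ‖ₙ ‖ψ - χ‖ₙ`. The norms `‖φ‖ₙ` are bounded, and
`‖ψ - χ‖ₙ² = ‖ψ‖ₙ² - 2⟨ψ, χ⟩ₙ + ‖χ‖ₙ²` converges to `‖ψ - χ‖²` by (c2) for `ψ`, so the error is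
eventually small uniformly in `n`. -/

lemma _root_.Filter.Tendsto.of_forall_approx {α X : Type*} [PseudoMetricSpace X] {l : Filter α}
    {x : α → X} {a : X}
    (h : ∀ ε > 0, ∃ (y : α → X) (b : X), Tendsto y l (𝓝 b) ∧
      (∀ᶠ n in l, dist (x n) (y n) ≤ ε) ∧ dist b a ≤ ε) :
    Tendsto x l (𝓝 a) := by
  refine Metric.tendsto_nhds.2 fun ε hε => ?_
  obtain ⟨y, b, hyb, hxy, hba⟩ := h (ε / 4) (by positivity)
  filter_upwards [hxy, Metric.tendsto_nhds.1 hyb (ε / 4) (by positivity)] with n hxyn hybn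
  calc dist (x n) a ≤ dist (x n) (y n) + dist (y n) b + dist b a := dist_triangle4 _ _ _ _
    _ < ε := by linarith

section ip

variable {μ : Measure E} {f g h : E → ℝ}

lemma ip_eq_inner_toLp (hf : MemLp f 2 μ) (hg : MemLp g 2 μ) :
    ip μ f g = inner ℝ (hf.toLp f) (hg.toLp g) := by
  rw [L2.inner_def]
  refine integral_congr_ae ?_
  filter_upwards [hf.coeFn_toLp, hg.coeFn_toLp] with x hfx hgx
  simp [hfx, hgx, mul_comm]

lemma abs_ip_le (hf : MemLp f 2 μ) (hg : MemLp g 2 μ) :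
    |ip μ f g| ≤ √(ip μ f f) * √(ip μ g g) := by
  simp only [ip_eq_inner_toLp hf hg, ip_eq_inner_toLp hf hf, ip_eq_inner_toLp hg hg,
    real_inner_self_eq_norm_mul_norm, Real.sqrt_mul_self (norm_nonneg _)]
  exact abs_real_inner_le_norm _ _

lemma ip_comm : ip μ f g = ip μ g f := by
  simp only [ip, mul_comm]

lemma ip_sub_right (hf : MemLp f 2 μ) (hg : MemLp g 2 μ) (hh : MemLp h 2 μ) :
    ip μ f (fun x => g x - h x) = ip μ f g - ip μ f h := by
  simp only [ip, mul_sub]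
  exact integral_sub (hf.integrable_mul hg) (hf.integrable_mul hh)

lemma ip_sub_sub (hf : MemLp f 2 μ) (hg : MemLp g 2 μ) :
    ip μ (fun x => f x - g x) (fun x => f x - g x) = ip μ f f - 2 * ip μ f g + ip μ g g := by
  have hsub : MemLp (fun x => f x - g x) 2 μ := hf.sub hg
  rw [ip_sub_right hsub hf hg, ip_comm (f := fun x => f x - g x),
    ip_comm (f := fun x => f x - g x), ip_sub_right hf hf hg, ip_sub_right hg hf hg,
    ip_comm (f := g)]
  ring

lemma dist_ip_le (hf : MemLp f 2 μ) (hg : MemLp g 2 μ) (hh : MemLp h 2 μ) :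
    dist (ip μ f g) (ip μ f h) ≤
      √(ip μ f f) * √(ip μ (fun x => g x - h x) (fun x => g x - h x)) := by
  rw [Real.dist_eq, ← ip_sub_right hf hg hh]
  exact abs_ip_le hf (hg.sub hh)

end ip

lemma tendsto_ip_sub_sub {μ : ℕ → Measure E} {f g : E → ℝ}
    (hf : ∀ n, MemLp f 2 (μ n)) (hg : ∀ n, MemLp g 2 (μ n))
    (hff : Tendsto (fun n => ip (μ n) f f) atTop (𝓝 (ip (μ 0) f f)))
    (hfg : Tendsto (fun n => ip (μ n) f g) atTop (𝓝 (ip (μ 0) f g)))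
    (hgg : Tendsto (fun n => ip (μ n) g g) atTop (𝓝 (ip (μ 0) g g))) :
    Tendsto (fun n => ip (μ n) (fun x => f x - g x) (fun x => f x - g x)) atTop
      (𝓝 (ip (μ 0) (fun x => f x - g x) (fun x => f x - g x))) := by
  simp only [ip_sub_sub (hf _) (hg _)]
  exact (hff.sub (hfg.const_mul 2)).add hgg

/-- Lemma 2.1 (d): for all `φ, ψ ∈ 𝓒` one has `⟨φ, ψ⟩ₙ → ⟨φ, ψ⟩` as `n → ∞`. -/
theorem ip_tendsto_of_mem_C (fr : Frame E) {φ ψ : E → ℝ} (hφ : φ ∈ fr.C) (hψ : ψ ∈ fr.C) :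
    Tendsto (fun n => ip (fr.ν n) φ ψ) atTop (𝓝 (ip (fr.ν 0) φ ψ)) := by
  obtain ⟨⟨-, hφL2, hφφ⟩, -, hφF⟩ := hφ
  obtain ⟨⟨hψm, hψL2, hψψ⟩, -, hψF⟩ := hψ
  obtain ⟨B, hB⟩ := hφφ.bddAbove_range
  obtain ⟨M, hM0, hM⟩ : ∃ M > 0, ∀ n, √(ip (fr.ν n) φ φ) ≤ M :=
    ⟨√B + 1, by positivity, fun n => (Real.sqrt_le_sqrt (hB ⟨n, rfl⟩)).trans (by linarith)⟩
  refine Tendsto.of_forall_approx fun ε hε => ?_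
  have hδ : 0 < ε / M := by positivity
  obtain ⟨χ, hχF, hψχ⟩ := fr.F_dense ψ hψm (hψL2 0) ((ε / M) ^ 2) (by positivity)
  have hχL2 := fr.F_memL2 χ hχF
  have err : ∀ n, ip (fr.ν n) (fun x => ψ x - χ x) (fun x => ψ x - χ x) < (ε / M) ^ 2 →
      dist (ip (fr.ν n) φ ψ) (ip (fr.ν n) φ χ) ≤ ε := fun n hn =>
    calc _ ≤ √(ip (fr.ν n) φ φ) * √(ip (fr.ν n) (fun x => ψ x - χ x) (fun x => ψ x - χ x)) :=
          dist_ip_le (hφL2 n) (hψL2 n) (hχL2 n)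
      _ ≤ M * (ε / M) := by
          gcongr
          · exact hM n
          · exact (Real.sqrt_le_sqrt hn.le).trans_eq (Real.sqrt_sq hδ.le)
      _ = ε := mul_div_cancel₀ ε hM0.ne'
  refine ⟨fun n => ip (fr.ν n) φ χ, ip (fr.ν 0) φ χ, hφF χ hχF, ?_, ?_⟩
  · filter_upwards [(tendsto_ip_sub_sub hψL2 hχL2 hψψ (hψF χ hχF)
      (fr.F_tendsto χ hχF)).eventually_lt_const hψχ] using err
  · exact (dist_comm _ _).trans_le (err 0 hψχ)

end Mosco
end
end

section
/- If a sequence φ_n ∈ 𝓒 satisfies sup_n ⟨φ_n, φ_n⟩_n < ∞, then there exist φ ∈ L²(E, ν) and a subsequence (n_k) such that ⟨φ_{n_k}, ψ⟩_{n_k} → ⟨φ, ψ⟩ as k → ∞ for every ψ ∈ 𝓒, i.e. φ_{n_k} w-converges to φ along the subsequence. -/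
open MeasureTheory Filter Topology

noncomputable section

namespace Mosco

variable {E : Type*} [MeasurableSpace E]

/-!
With `R² = sup ⟨φₙ, φₙ⟩ₙ`, Cauchy–Schwarz gives `|⟨φₙ, ψ⟩ₙ - ⟨φₙ, τ⟩ₙ| ≤ R ‖ψ - τ‖ₙ`, and for
`ψ ∈ 𝓒`, `τ ∈ 𝓕` the norms `‖ψ - τ‖ₙ` converge to `‖ψ - τ‖`. A diagonal argument gives a
subsequence along which `⟨φₙ, τ⟩ₙ` converges for `τ` in a countable subset of `𝓕` that is dense
in `L²(E, ν)`, and the estimate makes `⟨φₙ, ψ⟩ₙ` Cauchy for every `ψ ∈ 𝓒 ⊇ 𝓕`. On `𝓕` the limit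
is linear and bounded by `R ‖τ‖`, hence equal to `⟨φ, τ⟩` for some `φ ∈ L²(E, ν)` (Hahn–Banach
and Riesz), and the same estimate identifies the limit as `⟨φ, ψ⟩` on all of `𝓒`.
-/

open scoped RealInnerProductSpace

theorem cauchySeq_of_forall_eventually_abs_sub_le {u : ℕ → ℝ}
    (h : ∀ ε > 0, ∃ v : ℕ → ℝ, CauchySeq v ∧ ∀ᶠ k in atTop, |u k - v k| ≤ ε) :
    CauchySeq u := by
  refine Metric.cauchySeq_iff.2 fun ε hε => ?_
  obtain ⟨v, hv, huv⟩ := h (ε / 3) (by positivity)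
  obtain ⟨N₁, hN₁⟩ := Metric.cauchySeq_iff.1 hv (ε / 3) (by positivity)
  obtain ⟨N₂, hN₂⟩ := eventually_atTop.1 huv
  refine ⟨max N₁ N₂, fun m hm n hn => ?_⟩
  have hvmn := hN₁ m (le_of_max_le_left hm) n (le_of_max_le_left hn)
  have hm' := hN₂ m (le_of_max_le_right hm)
  have hn' := hN₂ n (le_of_max_le_right hn)
  rw [Real.dist_eq] at hvmn ⊢
  linarith [abs_sub_le (u m) (v m) (u n), abs_sub_le (v m) (v n) (u n), abs_sub_comm (v n) (u n)]

theorem eq_of_forall_abs_sub_le_mul {x y K : ℝ} (h : ∀ c > 0, |x - y| ≤ K * c) : x = y := by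
  have hK : Tendsto (fun c => K * c) (𝓝[>] 0) (𝓝 0) :=
    tendsto_nhdsWithin_of_tendsto_nhds ((continuous_const_mul K).tendsto' 0 0 (mul_zero K))
  exact sub_eq_zero.1 (abs_nonpos_iff.1 (ge_of_tendsto hK (eventually_nhdsWithin_of_forall h)))

theorem exists_strictMono_tendsto_of_abs_le {ι : Type*} [Countable ι] (x : ℕ → ι → ℝ)
    (C : ι → ℝ) (hx : ∀ n i, |x n i| ≤ C i) :
    ∃ (l : ι → ℝ) (nk : ℕ → ℕ), StrictMono nk ∧
      ∀ i, Tendsto (fun k => x (nk k) i) atTop (𝓝 (l i)) := by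
  have hK : IsCompact (Set.univ.pi fun i => Set.Icc (-C i) (C i)) :=
    isCompact_univ_pi fun _ => isCompact_Icc
  obtain ⟨l, -, nk, hnk, hl⟩ :=
    hK.tendsto_subseq fun n => Set.mem_univ_pi.2 fun i => abs_le.1 (hx n i)
  exact ⟨l, nk, hnk, tendsto_pi_nhds.1 hl⟩

theorem exists_inner_eq_of_abs_le {M H : Type*} [AddCommGroup M] [Module ℝ M]
    [NormedAddCommGroup H] [InnerProductSpace ℝ H] [CompleteSpace H]
    (J : M →ₗ[ℝ] H) (Λ : M →ₗ[ℝ] ℝ) (R : ℝ) (hΛ : ∀ x, |Λ x| ≤ R * ‖J x‖) :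
    ∃ y : H, ∀ x, Λ x = ⟪y, J x⟫ := by
  have hker : LinearMap.ker J ≤ LinearMap.ker Λ := fun x hx => by
    have := hΛ x
    rw [LinearMap.mem_ker.1 hx, norm_zero, mul_zero] at this
    exact LinearMap.mem_ker.2 (abs_nonpos_iff.1 this)
  let Λ' : LinearMap.range J →ₗ[ℝ] ℝ :=
    (LinearMap.ker J).liftQ Λ hker ∘ₗ J.quotKerEquivRange.symm.toLinearMap
  have hΛ' : ∀ x, Λ' (J.rangeRestrict x) = Λ x := fun x => by
    have : J.quotKerEquivRange.symm (J.rangeRestrict x) = Submodule.Quotient.mk x := by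
      rw [LinearEquiv.symm_apply_eq]
      exact Subtype.ext (LinearMap.quotKerEquivRange_apply_mk J x).symm
    simp only [Λ', LinearMap.comp_apply, LinearEquiv.coe_coe, this, Submodule.liftQ_apply]
  obtain ⟨g, hg, -⟩ := exists_extension_norm_eq _ <| Λ'.mkContinuous R <| by
    rintro ⟨_, x, rfl⟩
    exact (hΛ' x).symm ▸ hΛ x
  refine ⟨(InnerProductSpace.toDual ℝ H).symm g, fun x => ?_⟩
  rw [InnerProductSpace.toDual_symm_apply, ← hΛ' x]
  exact (hg _).symm

theorem Lp.exists_measurable_toLp_eq {p : ENNReal} {μ : Measure E} (y : Lp ℝ p μ) :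
    ∃ φ : E → ℝ, Measurable φ ∧ ∃ hφ : MemLp φ p μ, hφ.toLp φ = y := by
  have hy := Lp.aestronglyMeasurable y
  refine ⟨hy.mk y, hy.stronglyMeasurable_mk.measurable, (Lp.memLp y).ae_eq hy.ae_eq_mk, ?_⟩
  rw [MemLp.toLp_congr _ (Lp.memLp y) hy.ae_eq_mk.symm, Lp.toLp_coeFn]

section InnerProduct

variable {μ : Measure E} {φ ψ τ : E → ℝ}

theorem ip_eq_inner (hφ : MemLp φ 2 μ) (hψ : MemLp ψ 2 μ) :
    ip μ φ ψ = ⟪hφ.toLp φ, hψ.toLp ψ⟫ := by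
  rw [MeasureTheory.L2.inner_def]
  refine integral_congr_ae ?_
  filter_upwards [hφ.coeFn_toLp, hψ.coeFn_toLp] with x hφx hψx
  simp [hφx, hψx, mul_comm]

theorem sqrt_ip_self (hφ : MemLp φ 2 μ) : √(ip μ φ φ) = ‖hφ.toLp φ‖ := by
  rw [ip_eq_inner hφ hφ, real_inner_self_eq_norm_sq, Real.sqrt_sq (norm_nonneg _)]

theorem sqrt_ip_sub_self (hφ : MemLp φ 2 μ) (hψ : MemLp ψ 2 μ) :
    √(ip μ (φ - ψ) (φ - ψ)) = dist (hφ.toLp φ) (hψ.toLp ψ) := by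
  rw [sqrt_ip_self (hφ.sub hψ), dist_eq_norm, MemLp.toLp_sub]

theorem abs_ip_le_s5 (hφ : MemLp φ 2 μ) (hψ : MemLp ψ 2 μ) :
    |ip μ φ ψ| ≤ √(ip μ φ φ) * √(ip μ ψ ψ) := by
  rw [ip_eq_inner hφ hψ, sqrt_ip_self hφ, sqrt_ip_self hψ]
  exact abs_real_inner_le_norm _ _

theorem ip_sub_right_s5 (hφ : MemLp φ 2 μ) (hψ : MemLp ψ 2 μ) (hτ : MemLp τ 2 μ) :
    ip μ φ (ψ - τ) = ip μ φ ψ - ip μ φ τ := by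
  rw [ip_eq_inner hφ (hψ.sub hτ), ip_eq_inner hφ hψ, ip_eq_inner hφ hτ, MemLp.toLp_sub,
    inner_sub_right]

theorem ip_sub_sub_s5 (hψ : MemLp ψ 2 μ) (hτ : MemLp τ 2 μ) :
    ip μ (ψ - τ) (ψ - τ) = ip μ ψ ψ - 2 * ip μ ψ τ + ip μ τ τ := by
  rw [ip_eq_inner (hψ.sub hτ) (hψ.sub hτ), ip_eq_inner hψ hψ, ip_eq_inner hψ hτ,
    ip_eq_inner hτ hτ, MemLp.toLp_sub hψ hτ, real_inner_sub_sub_self]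

theorem ip_eq_ip_add_add (hψ : MemLp ψ 2 μ) (hτ : MemLp τ 2 μ) :
    ip μ ψ τ = (ip μ (ψ + τ) (ψ + τ) - ip μ ψ ψ - ip μ τ τ) / 2 := by
  rw [ip_eq_inner (hψ.add hτ) (hψ.add hτ), ip_eq_inner hψ hψ, ip_eq_inner hψ hτ,
    ip_eq_inner hτ hτ, MemLp.toLp_add hψ hτ, real_inner_add_add_self]
  ring

end InnerProduct

namespace Frame

variable (fr : Frame E)

theorem smul_add_smul_mem_F {φ ψ : E → ℝ} (hφ : φ ∈ fr.F) (hψ : ψ ∈ fr.F) (a b : ℝ) :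
    a • φ + b • ψ ∈ fr.F :=
  fr.F_linear φ hφ ψ hψ a b

theorem zero_mem_F : (0 : E → ℝ) ∈ fr.F := by
  have := fr.prob 0
  obtain ⟨τ, hτ, -⟩ := fr.F_dense 0 measurable_const (memLp_const 0) 1 one_pos
  simpa using fr.smul_add_smul_mem_F hτ hτ 0 0

def Fsub : Submodule ℝ (E → ℝ) where
  carrier := fr.F
  zero_mem' := fr.zero_mem_F
  add_mem' hτ hσ := by simpa using fr.smul_add_smul_mem_F hτ hσ 1 1
  smul_mem' c _ hτ := by simpa using fr.smul_add_smul_mem_F hτ hτ c 0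

def toL2 (n : ℕ) : fr.Fsub →ₗ[ℝ] Lp ℝ 2 (fr.ν n) where
  toFun τ := (fr.F_memL2 τ τ.2 n).toLp τ
  map_add' _ _ := MemLp.toLp_add _ _
  map_smul' _ _ := MemLp.toLp_const_smul _ _

theorem toL2_apply (n : ℕ) (τ : fr.Fsub) : fr.toL2 n τ = (fr.F_memL2 τ τ.2 n).toLp τ :=
  rfl

theorem memLp_of_mem_C {ψ : E → ℝ} (hψ : ψ ∈ fr.C) (n : ℕ) : MemLp ψ 2 (fr.ν n) :=
  hψ.1.2.1 n

theorem F_subset_C : fr.F ⊆ fr.C := by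
  intro ψ hψ
  refine ⟨⟨fr.F_measurable ψ hψ, fr.F_memL2 ψ hψ, fr.F_tendsto ψ hψ⟩,
    fun n _ => ⟨ψ, hψ, ae_eq_refl ψ⟩, fun τ hτ => ?_⟩
  have hadd : ψ + τ ∈ fr.F := fr.Fsub.add_mem hψ hτ
  simp only [ip_eq_ip_add_add (fr.F_memL2 ψ hψ _) (fr.F_memL2 τ hτ _)]
  exact ((((fr.F_tendsto _ hadd).sub (fr.F_tendsto ψ hψ)).sub (fr.F_tendsto τ hτ)).div_const 2)

theorem tendsto_ip_sub_self {ψ τ : E → ℝ} (hψ : ψ ∈ fr.C) (hτ : τ ∈ fr.F) :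
    Tendsto (fun n => ip (fr.ν n) (ψ - τ) (ψ - τ)) atTop
      (𝓝 (ip (fr.ν 0) (ψ - τ) (ψ - τ))) := by
  simp only [ip_sub_sub_s5 (fr.memLp_of_mem_C hψ _) (fr.F_memL2 τ hτ _)]
  exact (hψ.1.2.2.sub ((hψ.2.2 τ hτ).const_mul 2)).add (fr.F_tendsto τ hτ)

theorem exists_sqrt_ip_sub_lt {ψ : E → ℝ} (hψ : ψ ∈ fr.C) {c : ℝ} (hc : 0 < c) :
    ∃ τ ∈ fr.F, √(ip (fr.ν 0) (ψ - τ) (ψ - τ)) < c := by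
  obtain ⟨τ, hτ, hψτ⟩ := fr.F_dense ψ hψ.1.1 (fr.memLp_of_mem_C hψ 0) (c ^ 2) (by positivity)
  exact ⟨τ, hτ, (Real.sqrt_lt' hc).2 hψτ⟩

theorem exists_seq_dense : ∃ T : ℕ → E → ℝ, (∀ i, T i ∈ fr.F) ∧
    ∀ ψ ∈ fr.C, ∀ c > 0, ∃ i, √(ip (fr.ν 0) (ψ - T i) (ψ - T i)) < c := by
  have := fr.separableL2
  obtain ⟨t, hts, htc, hst⟩ := (TopologicalSpace.IsSeparable.of_separableSpace
    (Set.range (fr.toL2 0))).exists_countable_dense_subset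
  obtain ⟨u, rfl⟩ :=
    htc.exists_eq_range (closure_nonempty_iff.1 ((Set.range_nonempty _).mono hst))
  choose T hT using fun i => hts (Set.mem_range_self i)
  refine ⟨fun i => T i, fun i => (T i).2, fun ψ hψ c hc => ?_⟩
  have hψ0 := fr.memLp_of_mem_C hψ 0
  obtain ⟨τ, hτ, hψτ⟩ := fr.exists_sqrt_ip_sub_lt hψ (half_pos hc)
  obtain ⟨i, hτi⟩ := Metric.mem_closure_range_iff.1 (hst ⟨⟨τ, hτ⟩, rfl⟩) (c / 2) (half_pos hc)
  refine ⟨i, ?_⟩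
  rw [sqrt_ip_sub_self hψ0 (fr.F_memL2 τ hτ 0)] at hψτ
  rw [toL2_apply] at hτi
  rw [sqrt_ip_sub_self hψ0 (fr.F_memL2 _ (T i).2 0), ← toL2_apply, hT i]
  linarith [dist_triangle (hψ0.toLp ψ) ((fr.F_memL2 τ hτ 0).toLp τ) (u i)]

variable {φs : ℕ → E → ℝ} {R : ℝ}

theorem exists_abs_ip_le (hφs : ∀ n, MemLp (φs n) 2 (fr.ν n))
    (hR : ∀ n, √(ip (fr.ν n) (φs n) (φs n)) ≤ R)
    {τ : E → ℝ} (hτ : τ ∈ fr.F) :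
    ∃ C, ∀ n, |ip (fr.ν n) (φs n) τ| ≤ C := by
  obtain ⟨C, hC⟩ := (fr.F_tendsto τ hτ).sqrt.bddAbove_range
  refine ⟨R * C, fun n => (abs_ip_le_s5 (hφs n) (fr.F_memL2 τ hτ n)).trans ?_⟩
  exact mul_le_mul (hR n) (hC (Set.mem_range_self n)) (Real.sqrt_nonneg _)
    ((Real.sqrt_nonneg _).trans (hR 0))

theorem eventually_abs_ip_sub_le (hφs : ∀ n, MemLp (φs n) 2 (fr.ν n))
    (hR : ∀ n, √(ip (fr.ν n) (φs n) (φs n)) ≤ R)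
    {ψ τ : E → ℝ} (hψ : ψ ∈ fr.C) (hτ : τ ∈ fr.F) {c : ℝ}
    (hc : √(ip (fr.ν 0) (ψ - τ) (ψ - τ)) < c) :
    ∀ᶠ n in atTop, |ip (fr.ν n) (φs n) ψ - ip (fr.ν n) (φs n) τ| ≤ R * c := by
  filter_upwards [(fr.tendsto_ip_sub_self hψ hτ).sqrt.eventually_lt_const hc] with n hn
  have hψn := fr.memLp_of_mem_C hψ n
  have hτn := fr.F_memL2 τ hτ n
  rw [← ip_sub_right_s5 (hφs n) hψn hτn]
  exact (abs_ip_le_s5 (hφs n) (hψn.sub hτn)).trans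
    (mul_le_mul (hR n) hn.le (Real.sqrt_nonneg _) ((Real.sqrt_nonneg _).trans (hR 0)))

theorem cauchySeq_ip_subseq (hφs : ∀ n, MemLp (φs n) 2 (fr.ν n))
    (hR : ∀ n, √(ip (fr.ν n) (φs n) (φs n)) ≤ R)
    {T : ℕ → E → ℝ} (hT : ∀ i, T i ∈ fr.F)
    (hTdense : ∀ ψ ∈ fr.C, ∀ c > 0, ∃ i, √(ip (fr.ν 0) (ψ - T i) (ψ - T i)) < c)
    {nk : ℕ → ℕ} (hnk : Tendsto nk atTop atTop)
    (hconv : ∀ i, CauchySeq fun k => ip (fr.ν (nk k)) (φs (nk k)) (T i))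
    {ψ : E → ℝ} (hψ : ψ ∈ fr.C) :
    CauchySeq fun k => ip (fr.ν (nk k)) (φs (nk k)) ψ := by
  refine cauchySeq_of_forall_eventually_abs_sub_le fun ε hε => ?_
  have hR0 : 0 ≤ R := (Real.sqrt_nonneg _).trans (hR 0)
  obtain ⟨i, hi⟩ := hTdense ψ hψ (ε / (R + 1)) (by positivity)
  refine ⟨_, hconv i, (hnk.eventually (fr.eventually_abs_ip_sub_le hφs hR hψ (hT i) hi)).mono
    fun k hk => hk.trans ?_⟩
  calc R * (ε / (R + 1)) ≤ (R + 1) * (ε / (R + 1)) := by gcongr; linarith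
    _ = ε := mul_div_cancel₀ _ (by positivity)

theorem exists_tendsto_ip_of_forall_F (hφs : ∀ n, MemLp (φs n) 2 (fr.ν n))
    (hR : ∀ n, √(ip (fr.ν n) (φs n) (φs n)) ≤ R)
    {nk : ℕ → ℕ} (hnk : Tendsto nk atTop atTop)
    (hconv : ∀ τ ∈ fr.F, ∃ a, Tendsto (fun k => ip (fr.ν (nk k)) (φs (nk k)) τ) atTop (𝓝 a)) :
    ∃ φ, Measurable φ ∧ MemLp φ 2 (fr.ν 0) ∧
      ∀ τ ∈ fr.F, Tendsto (fun k => ip (fr.ν (nk k)) (φs (nk k)) τ) atTop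
        (𝓝 (ip (fr.ν 0) φ τ)) := by
  choose Λ hΛ using fun τ : fr.Fsub => hconv τ τ.2
  let g : ℕ → fr.Fsub →ₗ[ℝ] ℝ := fun k =>
    innerₛₗ ℝ ((hφs (nk k)).toLp (φs (nk k))) ∘ₗ fr.toL2 (nk k)
  have hg : ∀ k τ, g k τ = ip (fr.ν (nk k)) (φs (nk k)) τ := fun k τ =>
    (ip_eq_inner (hφs (nk k)) (fr.F_memL2 τ τ.2 (nk k))).symm
  let Λₗ := linearMapOfTendsto Λ g (tendsto_pi_nhds.2 fun τ => by simpa only [hg] using hΛ τ)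
  have hbound : ∀ τ, |Λₗ τ| ≤ R * ‖fr.toL2 0 τ‖ := fun τ => by
    rw [linearMapOfTendsto_apply, toL2_apply, ← sqrt_ip_self]
    refine le_of_tendsto_of_tendsto' (hΛ τ).abs
      (((fr.F_tendsto τ τ.2).comp hnk).sqrt.const_mul R) fun k => ?_
    exact (abs_ip_le_s5 (hφs _) (fr.F_memL2 τ τ.2 _)).trans
      (mul_le_mul_of_nonneg_right (hR _) (Real.sqrt_nonneg _))
  obtain ⟨y, hy⟩ := exists_inner_eq_of_abs_le (fr.toL2 0) Λₗ R hbound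
  obtain ⟨φ, hφm, hφ, rfl⟩ := Lp.exists_measurable_toLp_eq y
  refine ⟨φ, hφm, hφ, fun τ hτ => ?_⟩
  rw [ip_eq_inner hφ (fr.F_memL2 τ hτ 0)]
  exact (hy ⟨τ, hτ⟩) ▸ hΛ ⟨τ, hτ⟩

theorem tendsto_ip_of_forall_F (hφs : ∀ n, MemLp (φs n) 2 (fr.ν n))
    (hR : ∀ n, √(ip (fr.ν n) (φs n) (φs n)) ≤ R)
    {nk : ℕ → ℕ} (hnk : Tendsto nk atTop atTop) {φ : E → ℝ}
    (hφ : MemLp φ 2 (fr.ν 0))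
    (hF : ∀ τ ∈ fr.F, Tendsto (fun k => ip (fr.ν (nk k)) (φs (nk k)) τ) atTop
      (𝓝 (ip (fr.ν 0) φ τ)))
    {ψ : E → ℝ} (hψ : ψ ∈ fr.C) (hcauchy : CauchySeq fun k => ip (fr.ν (nk k)) (φs (nk k)) ψ) :
    Tendsto (fun k => ip (fr.ν (nk k)) (φs (nk k)) ψ) atTop (𝓝 (ip (fr.ν 0) φ ψ)) := by
  obtain ⟨a, ha⟩ := cauchySeq_tendsto_of_complete hcauchy
  suffices a = ip (fr.ν 0) φ ψ from this ▸ ha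
  refine eq_of_forall_abs_sub_le_mul (K := R + √(ip (fr.ν 0) φ φ)) fun c hc => ?_
  obtain ⟨τ, hτ, hψτ⟩ := fr.exists_sqrt_ip_sub_lt hψ hc
  have hψ0 := fr.memLp_of_mem_C hψ 0
  have hτ0 := fr.F_memL2 τ hτ 0
  have hlim : |a - ip (fr.ν 0) φ τ| ≤ R * c :=
    le_of_tendsto (ha.sub (hF τ hτ)).abs
      (hnk.eventually (fr.eventually_abs_ip_sub_le hφs hR hψ hτ hψτ))
  have hφψτ : |ip (fr.ν 0) φ ψ - ip (fr.ν 0) φ τ| ≤ √(ip (fr.ν 0) φ φ) * c := by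
    rw [← ip_sub_right_s5 hφ hψ0 hτ0]
    exact (abs_ip_le_s5 hφ (hψ0.sub hτ0)).trans
      (mul_le_mul_of_nonneg_left hψτ.le (Real.sqrt_nonneg _))
  rw [add_mul]
  linarith [abs_sub_le a (ip (fr.ν 0) φ τ) (ip (fr.ν 0) φ ψ),
    abs_sub_comm (ip (fr.ν 0) φ τ) (ip (fr.ν 0) φ ψ)]

end Frame

/-- Proposition 2.3 (b): if a sequence `φs n ∈ 𝓒` satisfies `sup_n ⟨φs n, φs n⟩ₙ < ∞`,
then some subsequence `φs (nk k)` `w`-converges to some `φ ∈ L²(E, ν)`. -/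
theorem exists_wconv_subseq (fr : Frame E) (φs : ℕ → E → ℝ) (hφs : ∀ n, φs n ∈ fr.C)
    (hbd : ∃ M : ℝ, ∀ n, ip (fr.ν n) (φs n) (φs n) ≤ M) :
    ∃ (φ : E → ℝ) (nk : ℕ → ℕ), Measurable φ ∧ MemLp φ 2 (fr.ν 0) ∧ StrictMono nk ∧
      ∀ ψ ∈ fr.C, Tendsto (fun k => ip (fr.ν (nk k)) (φs (nk k)) ψ)
        atTop (𝓝 (ip (fr.ν 0) φ ψ)) := by
  obtain ⟨M, hM⟩ := hbd
  have hφsL2 : ∀ n, MemLp (φs n) 2 (fr.ν n) := fun n => fr.memLp_of_mem_C (hφs n) n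
  have hR : ∀ n, √(ip (fr.ν n) (φs n) (φs n)) ≤ √M := fun n => Real.sqrt_le_sqrt (hM n)
  obtain ⟨T, hT, hTdense⟩ := fr.exists_seq_dense
  choose C hC using fun i => fr.exists_abs_ip_le hφsL2 hR (hT i)
  obtain ⟨l, nk, hnk, hconv⟩ :=
    exists_strictMono_tendsto_of_abs_le (fun n i => ip (fr.ν n) (φs n) (T i)) C fun n i => hC i n
  have hcauchy : ∀ ψ ∈ fr.C, CauchySeq fun k => ip (fr.ν (nk k)) (φs (nk k)) ψ :=
    fun ψ => fr.cauchySeq_ip_subseq hφsL2 hR hT hTdense hnk.tendsto_atTop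
      (fun i => (hconv i).cauchySeq)
  obtain ⟨φ, hφm, hφ, hφF⟩ := fr.exists_tendsto_ip_of_forall_F hφsL2 hR hnk.tendsto_atTop
    fun τ hτ => cauchySeq_tendsto_of_complete (hcauchy τ (fr.F_subset_C hτ))
  exact ⟨φ, nk, hφm, hφ, hnk, fun ψ hψ =>
    fr.tendsto_ip_of_forall_F hφsL2 hR hnk.tendsto_atTop hφ hφF hψ (hcauchy ψ hψ)⟩

end Mosco
end
end
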